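/- Let m ≥ 1 be an integer and let (b,d) ∈ S_m. Then the denominator m/(2+m) − ((2+m)/m) d − (2m/(2+m)) b + (4(1+m)/(m(2+m)))(2 b^{−m/2} − 1) d^{1+m/2} + 2 t₀(b,m) appearing in W(b,d,m) is positive and equals ∫₀^∞ |f_{b,d,m}(t)| dt, and the Lebesgue measure of {t ∈ [0,∞) : |Λ_m f_{b,d,m}(t)| ≥ 1} is at least d − 1; consequently |{t ∈ [0,∞) : |Λ_m f_{b,d,m}(t)| ≥ 1}| ≥ W(b,d,m) · ∫₀^∞ |f_{b,d,m}(t)| dt. -/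

import Mathlib

/-!
On `(1, b]` and on `(b, d]` the function `f = f_{b,d,m}` has the form `P + Q t^{m/2}`, so the
weighted primitive `F(t) = ∫₀ᵗ f(s) s^{m/2} ds` is explicit: `F(t) = (2/m)(t^{1+m/2} - t^{1+m})` on
`[1, b]` and, because `D(b,m)` is chosen so that the terms in `b` cancel,
`F(t) = (2/m)((2 b^{-m/2} - 1) t^{1+m} - t^{1+m/2})` on `[b, d]`. Hence
`Λ_m f = (1+m) t^{-(1+m/2)} F - f` equals `1` on `(1, b]` and `-1` on `(b, d]`, so `{|Λ_m f| ≥ 1}`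
contains `(1, d]`. The `L¹` norm is computed piecewise: `f < 0` on `(1, b]`, and on `(b, d]` it
changes sign exactly at `t₀`, where `D(b,m) t₀^{m/2} = (2+m)/m`; the sign conditions in `S_m`
amount to `b < t₀ < d`.
-/

open MeasureTheory Real Set

/-- The operator `Λ_m`. -/
noncomputable def Lam (m : ℕ) (f : ℝ → ℝ) (t : ℝ) : ℝ :=
  ((1 + (m : ℝ)) / t ^ (1 + (m : ℝ) / 2)) * (∫ s in (0:ℝ)..t, f s * s ^ ((m : ℝ) / 2)) - f t

/-- The coefficient `D(b,m) = (2(1+m)/m)(2 b^{-m/2} - 1)`. -/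
noncomputable def Dcoef (m : ℕ) (b : ℝ) : ℝ :=
  (2 * (1 + (m : ℝ)) / (m : ℝ)) * (2 * b ^ (-(m : ℝ) / 2) - 1)

/-- The parameter set `S_m`. -/
def Sset (m : ℕ) : Set (ℝ × ℝ) :=
  {p : ℝ × ℝ | 1 < p.1 ∧ p.1 < p.2 ∧ 0 < Dcoef m p.1 ∧
    -(2 + (m : ℝ)) / (m : ℝ) + Dcoef m p.1 * p.1 ^ ((m : ℝ) / 2) < 0 ∧
    0 < -(2 + (m : ℝ)) / (m : ℝ) + Dcoef m p.1 * p.2 ^ ((m : ℝ) / 2) ∧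
    -(2 + (m : ℝ)) / (m : ℝ) + Dcoef m p.1 * p.2 ^ ((m : ℝ) / 2) < 2}

/-- The function `f_{b,d,m}` from the class `F^sp_m`. -/
noncomputable def fsp (m : ℕ) (b d t : ℝ) : ℝ :=
  if 1 < t ∧ t ≤ b then (2 + (m : ℝ)) / (m : ℝ) - (2 * (1 + (m : ℝ)) / (m : ℝ)) * t ^ ((m : ℝ) / 2)
  else if b < t ∧ t ≤ d then -(2 + (m : ℝ)) / (m : ℝ) + Dcoef m b * t ^ ((m : ℝ) / 2)
  else 0

/-- `t₀(b,m)`. -/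
noncomputable def t0 (m : ℕ) (b : ℝ) : ℝ :=
  ((2 + (m : ℝ)) / (2 * (1 + (m : ℝ)))) ^ (2 / (m : ℝ)) *
    (2 * b ^ (-(m : ℝ) / 2) - 1) ^ (-(2 / (m : ℝ)))

/-- The denominator of `W(b,d,m)`. -/
noncomputable def denom (m : ℕ) (b d : ℝ) : ℝ :=
  (m : ℝ) / (2 + (m : ℝ)) - ((2 + (m : ℝ)) / (m : ℝ)) * d - (2 * (m : ℝ) / (2 + (m : ℝ))) * b
    + (4 * (1 + (m : ℝ)) / ((m : ℝ) * (2 + (m : ℝ)))) * (2 * b ^ (-(m : ℝ) / 2) - 1)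
      * d ^ (1 + (m : ℝ) / 2)
    + 2 * t0 m b

/-- `W(b,d,m)`. -/
noncomputable def Wf (m : ℕ) (b d : ℝ) : ℝ := (d - 1) / denom m b d

/-- The weak-type ratio of `f_{b,d,m}` under `Λ_m`. -/
noncomputable def ratio (m : ℕ) (b d : ℝ) : ℝ :=
  (MeasureTheory.volume {t : ℝ | 0 ≤ t ∧ 1 ≤ |Lam m (fsp m b d) t|}).toReal /
    ∫ t in Set.Ici (0 : ℝ), |fsp m b d t|

/-- The restricted weak-type constant of `Λ_m` over the class `F^sp_m`. -/
noncomputable def Rsp (m : ℕ) : ℝ :=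
  sSup {r : ℝ | ∃ b d : ℝ, (b, d) ∈ Sset m ∧ r = ratio m b d}

open intervalIntegral
open scoped Interval

section RpowIntegrals

variable {p : ℝ}

lemma integral_const_add_mul_rpow (hp : 0 ≤ p) (P Q u v : ℝ) :
    ∫ s in u..v, (P + Q * s ^ p) = P * (v - u) + Q * ((v ^ (p + 1) - u ^ (p + 1)) / (p + 1)) := by
  rw [integral_add intervalIntegrable_const ((intervalIntegrable_rpow' (by linarith)).const_mul Q),
    intervalIntegral.integral_const, intervalIntegral.integral_const_mul,
    integral_rpow (Or.inl (by linarith)), smul_eq_mul, mul_comm]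

lemma integral_const_add_mul_rpow_mul_rpow (hp : 0 ≤ p) (P Q : ℝ) {u v : ℝ} (hu : 0 ≤ u)
    (huv : u ≤ v) :
    ∫ s in u..v, (P + Q * s ^ p) * s ^ p =
      P * ((v ^ (p + 1) - u ^ (p + 1)) / (p + 1)) +
        Q * ((v ^ (2 * p + 1) - u ^ (2 * p + 1)) / (2 * p + 1)) := by
  have h : EqOn (fun s => (P + Q * s ^ p) * s ^ p) (fun s => P * s ^ p + Q * s ^ (2 * p))
      (Ι u v) := by
    intro s hs
    have hs₀ : 0 < s := hu.trans_lt (uIoc_of_le huv ▸ hs).1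
    simp only [two_mul, rpow_add hs₀]
    ring
  rw [integral_congr_ae (.of_forall h),
    integral_add ((intervalIntegrable_rpow' (by linarith)).const_mul P)
      ((intervalIntegrable_rpow' (by linarith)).const_mul Q),
    intervalIntegral.integral_const_mul, intervalIntegral.integral_const_mul,
    integral_rpow (Or.inl (by linarith)), integral_rpow (Or.inl (by linarith))]

end RpowIntegrals

lemma rpow_add_one_eq_rpow_half_mul {x : ℝ} (hx : 0 < x) (c : ℝ) :
    x ^ (c + 1) = x ^ (c / 2) * x ^ (c / 2) * x := by
  rw [rpow_add_one hx.ne', ← rpow_add hx, add_halves]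

lemma integral_abs_of_nonpos_on {f : ℝ → ℝ} {u v : ℝ} (h : ∀ x ∈ Ι u v, f x ≤ 0) :
    ∫ x in u..v, |f x| = -∫ x in u..v, f x := by
  rw [← intervalIntegral.integral_neg]
  exact integral_congr_ae (.of_forall fun x hx => abs_of_nonpos (h x hx))

lemma integral_abs_of_nonneg_on {f : ℝ → ℝ} {u v : ℝ} (h : ∀ x ∈ Ι u v, 0 ≤ f x) :
    ∫ x in u..v, |f x| = ∫ x in u..v, f x :=
  integral_congr_ae (.of_forall fun x hx => abs_of_nonneg (h x hx))

section Fsp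

variable {m : ℕ} {b d t : ℝ}

lemma support_fsp_subset (hb : 1 ≤ b) (hbd : b ≤ d) :
    Function.support (fsp m b d) ⊆ Ioc 1 d := by
  intro t (ht : fsp m b d t ≠ 0)
  unfold fsp at ht
  split_ifs at ht with h₁ h₂
  · exact ⟨h₁.1, h₁.2.trans hbd⟩
  · exact ⟨by linarith [h₂.1], h₂.2⟩
  · exact absurd rfl ht

lemma fsp_eq_zero_of_notMem_Ioc (hb : 1 ≤ b) (hbd : b ≤ d) (ht : t ∉ Ioc 1 d) :
    fsp m b d t = 0 :=
  Function.notMem_support.mp fun h => ht (support_fsp_subset hb hbd h)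

lemma fsp_of_mem_Ioc_one (ht : t ∈ Ioc 1 b) :
    fsp m b d t = (2 + m) / m + -(2 * (1 + m) / m) * t ^ ((m : ℝ) / 2) := by
  rw [fsp, if_pos (mem_Ioc.mp ht)]
  ring

lemma fsp_of_mem_Ioc (ht : t ∈ Ioc b d) :
    fsp m b d t = -(2 + m) / m + Dcoef m b * t ^ ((m : ℝ) / 2) := by
  rw [fsp, if_neg fun h => ht.1.not_ge h.2, if_pos (mem_Ioc.mp ht)]

lemma intervalIntegrable_fsp (hb : 1 ≤ b) (hbd : b ≤ d) {u v : ℝ} (hu : u ∈ Icc 0 d)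
    (hv : v ∈ Icc 0 d) : IntervalIntegrable (fsp m b d) volume u v := by
  have hcont (P Q : ℝ) : Continuous fun s : ℝ => P + Q * s ^ ((m : ℝ) / 2) :=
    continuous_const.add (continuous_const.mul (continuous_rpow_const (by positivity)))
  have h₀ : IntervalIntegrable (fsp m b d) volume 0 1 :=
    intervalIntegrable_const.congr fun s hs =>
      (fsp_eq_zero_of_notMem_Ioc hb hbd fun h =>
        (uIoc_of_le (zero_le_one' ℝ) ▸ hs).2.not_gt h.1).symm
  have h₁ : IntervalIntegrable (fsp m b d) volume 1 b :=
    ((hcont _ _).intervalIntegrable 1 b).congr fun s hs =>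
      (fsp_of_mem_Ioc_one (uIoc_of_le hb ▸ hs)).symm
  have h₂ : IntervalIntegrable (fsp m b d) volume b d :=
    ((hcont _ _).intervalIntegrable b d).congr fun s hs =>
      (fsp_of_mem_Ioc (uIoc_of_le hbd ▸ hs)).symm
  exact ((h₀.trans h₁).trans h₂).mono_set
    (uIcc_subset_uIcc (mem_uIcc_of_le hu.1 hu.2) (mem_uIcc_of_le hv.1 hv.2))

lemma intervalIntegrable_fsp_mul_rpow (hb : 1 ≤ b) (hbd : b ≤ d) {u v : ℝ}
    (hu : u ∈ Icc 0 d) (hv : v ∈ Icc 0 d) :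
    IntervalIntegrable (fun s => fsp m b d s * s ^ ((m : ℝ) / 2)) volume u v :=
  (intervalIntegrable_fsp hb hbd hu hv).mul_continuousOn
    (continuous_rpow_const (by positivity)).continuousOn

lemma integral_fsp_mul_rpow_of_mem_Icc_one (hm : 0 < m) (hb : 1 ≤ b) (hbd : b ≤ d)
    (ht : t ∈ Icc 1 b) :
    ∫ s in 0..t, fsp m b d s * s ^ ((m : ℝ) / 2) =
      2 / m * (t ^ ((m : ℝ) / 2 + 1) - t ^ ((m : ℝ) + 1)) := by
  have hm' : (0 : ℝ) < m := Nat.cast_pos.mpr hm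
  have hzero : ∫ s in 0..1, fsp m b d s * s ^ ((m : ℝ) / 2) = 0 := by
    rw [integral_congr_ae (g := fun _ => 0) (.of_forall fun s hs => ?_),
      intervalIntegral.integral_zero]
    rw [fsp_eq_zero_of_notMem_Ioc hb hbd fun h =>
      (uIoc_of_le (zero_le_one' ℝ) ▸ hs).2.not_gt h.1, zero_mul]
  have hbranch : ∫ s in 1..t, fsp m b d s * s ^ ((m : ℝ) / 2) =
      ∫ s in 1..t,
        ((2 + m) / m + -(2 * (1 + m) / m) * s ^ ((m : ℝ) / 2)) * s ^ ((m : ℝ) / 2) := by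
    refine integral_congr_ae (.of_forall fun s hs => ?_)
    rw [uIoc_of_le ht.1] at hs
    rw [fsp_of_mem_Ioc_one ⟨hs.1, hs.2.trans ht.2⟩]
  rw [← integral_add_adjacent_intervals
      (intervalIntegrable_fsp_mul_rpow hb hbd ⟨le_rfl, by linarith⟩
        ⟨zero_le_one, by linarith⟩)
      (intervalIntegrable_fsp_mul_rpow hb hbd ⟨zero_le_one, by linarith⟩
        ⟨by linarith [ht.1], ht.2.trans hbd⟩),
    hzero, hbranch, integral_const_add_mul_rpow_mul_rpow (by positivity) _ _ zero_le_one ht.1,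
    one_rpow, one_rpow, show 2 * ((m : ℝ) / 2) + 1 = m + 1 by ring]
  field_simp
  ring

lemma integral_fsp_mul_rpow_of_mem_Icc (hm : 0 < m) (hb : 1 ≤ b) (ht : t ∈ Icc b d) :
    ∫ s in 0..t, fsp m b d s * s ^ ((m : ℝ) / 2) =
      2 / m * ((2 * b ^ (-(m : ℝ) / 2) - 1) * t ^ ((m : ℝ) + 1) - t ^ ((m : ℝ) / 2 + 1)) := by
  have hbd := ht.1.trans ht.2
  have hb₀ : 0 < b := by linarith
  have hm' : (0 : ℝ) < m := Nat.cast_pos.mpr hm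
  have hbranch : ∫ s in b..t, fsp m b d s * s ^ ((m : ℝ) / 2) =
      ∫ s in b..t, (-(2 + m) / m + Dcoef m b * s ^ ((m : ℝ) / 2)) * s ^ ((m : ℝ) / 2) := by
    refine integral_congr_ae (.of_forall fun s hs => ?_)
    rw [uIoc_of_le ht.1] at hs
    rw [fsp_of_mem_Ioc ⟨hs.1, hs.2.trans ht.2⟩]
  rw [← integral_add_adjacent_intervals
      (intervalIntegrable_fsp_mul_rpow hb hbd ⟨le_rfl, by linarith⟩ ⟨hb₀.le, hbd⟩)
      (intervalIntegrable_fsp_mul_rpow hb hbd ⟨hb₀.le, hbd⟩ ⟨by linarith [ht.1], ht.2⟩),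
    integral_fsp_mul_rpow_of_mem_Icc_one hm hb hbd ⟨hb, le_rfl⟩, hbranch,
    integral_const_add_mul_rpow_mul_rpow (by positivity) _ _ hb₀.le ht.1,
    show 2 * ((m : ℝ) / 2) + 1 = m + 1 by ring, Dcoef, neg_div (2 : ℝ) (m : ℝ),
    rpow_neg hb₀.le,
    rpow_add_one_eq_rpow_half_mul hb₀ (m : ℝ), rpow_add_one hb₀.ne' ((m : ℝ) / 2)]
  have hY : 0 < b ^ ((m : ℝ) / 2) := rpow_pos_of_pos hb₀ _
  generalize b ^ ((m : ℝ) / 2) = Y at hY ⊢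
  generalize t ^ ((m : ℝ) / 2 + 1) = T₁
  generalize t ^ ((m : ℝ) + 1) = T₂
  field_simp
  ring

lemma Lam_fsp_of_mem_Ioc_one (hm : 0 < m) (hb : 1 ≤ b) (hbd : b ≤ d) (ht : t ∈ Ioc 1 b) :
    Lam m (fsp m b d) t = 1 := by
  have ht₀ : 0 < t := by linarith [ht.1]
  have hm' : (0 : ℝ) < m := Nat.cast_pos.mpr hm
  rw [Lam, integral_fsp_mul_rpow_of_mem_Icc_one hm hb hbd (Ioc_subset_Icc_self ht),
    fsp_of_mem_Ioc_one ht, rpow_add_one_eq_rpow_half_mul ht₀ (m : ℝ),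
    rpow_add_one ht₀.ne' ((m : ℝ) / 2), rpow_add ht₀ 1, rpow_one]
  have hX : 0 < t ^ ((m : ℝ) / 2) := rpow_pos_of_pos ht₀ _
  generalize t ^ ((m : ℝ) / 2) = X at hX ⊢
  field_simp
  ring

lemma Lam_fsp_of_mem_Ioc (hm : 0 < m) (hb : 1 ≤ b) (ht : t ∈ Ioc b d) :
    Lam m (fsp m b d) t = -1 := by
  have ht₀ : 0 < t := by linarith [ht.1]
  have hm' : (0 : ℝ) < m := Nat.cast_pos.mpr hm
  rw [Lam, integral_fsp_mul_rpow_of_mem_Icc hm hb (Ioc_subset_Icc_self ht),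
    fsp_of_mem_Ioc ht, Dcoef, rpow_add_one_eq_rpow_half_mul ht₀ (m : ℝ),
    rpow_add_one ht₀.ne' ((m : ℝ) / 2), rpow_add ht₀ 1, rpow_one]
  have hX : 0 < t ^ ((m : ℝ) / 2) := rpow_pos_of_pos ht₀ _
  generalize t ^ ((m : ℝ) / 2) = X at hX ⊢
  field_simp
  ring

lemma ofReal_sub_one_le_volume_Lam_fsp (hm : 0 < m) (hb : 1 ≤ b) (hbd : b ≤ d) :
    ENNReal.ofReal (d - 1) ≤ volume {t : ℝ | 0 ≤ t ∧ 1 ≤ |Lam m (fsp m b d) t|} := by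
  rw [← volume_Ioc]
  refine measure_mono fun t ht => ⟨by linarith [ht.1], ?_⟩
  rcases le_or_gt t b with htb | htb
  · rw [Lam_fsp_of_mem_Ioc_one hm hb hbd ⟨ht.1, htb⟩, abs_one]
  · rw [Lam_fsp_of_mem_Ioc hm hb ⟨htb, ht.2⟩, abs_neg, abs_one]

lemma two_mul_rpow_neg_sub_one_pos (hD : 0 < Dcoef m b) : 0 < 2 * b ^ (-(m : ℝ) / 2) - 1 :=
  pos_of_mul_pos_right hD (by positivity)

lemma t0_pos (hD : 0 < Dcoef m b) : 0 < t0 m b := by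
  have := two_mul_rpow_neg_sub_one_pos hD
  unfold t0
  positivity

lemma Dcoef_mul_t0_rpow (hm : 0 < m) (hD : 0 < Dcoef m b) :
    Dcoef m b * t0 m b ^ ((m : ℝ) / 2) = (2 + m) / m := by
  have hm' : (0 : ℝ) < m := Nat.cast_pos.mpr hm
  have hβ := two_mul_rpow_neg_sub_one_pos hD
  have hA : 0 < (2 + (m : ℝ)) / (2 * (1 + m)) := by positivity
  rw [t0, mul_rpow (by positivity) (by positivity), ← rpow_mul hA.le, ← rpow_mul hβ.le,
    show 2 / (m : ℝ) * (m / 2) = 1 by field_simp,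
    show -(2 / (m : ℝ)) * (m / 2) = -1 by field_simp,
    rpow_one, rpow_neg_one, Dcoef]
  generalize 2 * b ^ (-(m : ℝ) / 2) - 1 = β at hβ ⊢
  field_simp

lemma lt_t0 (hm : 0 < m) (hb : 0 ≤ b) (hD : 0 < Dcoef m b)
    (hfb : -(2 + (m : ℝ)) / m + Dcoef m b * b ^ ((m : ℝ) / 2) < 0) : b < t0 m b := by
  have hm' : (0 : ℝ) < m := Nat.cast_pos.mpr hm
  rw [← rpow_lt_rpow_iff hb (t0_pos hD).le (by positivity : (0 : ℝ) < m / 2),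
    ← mul_lt_mul_iff_of_pos_left hD, Dcoef_mul_t0_rpow hm hD]
  rw [neg_div] at hfb
  linarith

lemma t0_lt (hm : 0 < m) (hd : 0 ≤ d) (hD : 0 < Dcoef m b)
    (hfd : 0 < -(2 + (m : ℝ)) / m + Dcoef m b * d ^ ((m : ℝ) / 2)) : t0 m b < d := by
  have hm' : (0 : ℝ) < m := Nat.cast_pos.mpr hm
  rw [← rpow_lt_rpow_iff (t0_pos hD).le hd (by positivity : (0 : ℝ) < m / 2),
    ← mul_lt_mul_iff_of_pos_left hD, Dcoef_mul_t0_rpow hm hD]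
  rw [neg_div] at hfd
  linarith

lemma fsp_neg_of_mem_Ioc_one (hm : 0 < m) (ht : t ∈ Ioc 1 b) : fsp m b d t < 0 := by
  have hm' : (0 : ℝ) < m := Nat.cast_pos.mpr hm
  have ht' : 1 < t ^ ((m : ℝ) / 2) := one_lt_rpow ht.1 (by positivity)
  have hK : 2 * (1 + (m : ℝ)) / m = (2 + m) / m + 1 := by field_simp; ring
  rw [fsp_of_mem_Ioc_one ht, hK]
  nlinarith [div_pos (by positivity : (0 : ℝ) < 2 + m) hm']

lemma fsp_nonpos_of_mem_Ioc (hm : 0 < m) (hb : 0 ≤ b) (hD : 0 < Dcoef m b)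
    (ht : t ∈ Ioc b (t0 m b)) (hd : t0 m b ≤ d) : fsp m b d t ≤ 0 := by
  have hle := mul_le_mul_of_nonneg_left
    (rpow_le_rpow (hb.trans ht.1.le) ht.2 (by positivity : (0 : ℝ) ≤ m / 2)) hD.le
  rw [Dcoef_mul_t0_rpow hm hD] at hle
  rw [fsp_of_mem_Ioc ⟨ht.1, ht.2.trans hd⟩, neg_div]
  linarith

lemma fsp_nonneg_of_mem_Ioc (hm : 0 < m) (hD : 0 < Dcoef m b) (hb : b ≤ t0 m b)
    (ht : t ∈ Ioc (t0 m b) d) : 0 ≤ fsp m b d t := by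
  have hle := mul_le_mul_of_nonneg_left
    (rpow_le_rpow (t0_pos hD).le ht.1.le (by positivity : (0 : ℝ) ≤ m / 2)) hD.le
  rw [Dcoef_mul_t0_rpow hm hD] at hle
  rw [fsp_of_mem_Ioc ⟨hb.trans_lt ht.1, ht.2⟩, neg_div]
  linarith

lemma integral_fsp_one_to_b (hb : 1 ≤ b) :
    ∫ s in 1..b, fsp m b d s =
      (2 + m) / m * (b - 1) +
        -(2 * (1 + m) / m) * ((b ^ ((m : ℝ) / 2 + 1) - 1) / (m / 2 + 1)) := by
  rw [integral_congr_ae (.of_forall fun s hs => fsp_of_mem_Ioc_one (uIoc_of_le hb ▸ hs)),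
    integral_const_add_mul_rpow (by positivity), one_rpow]

lemma integral_fsp_of_b_le {u v : ℝ} (hbu : b ≤ u) (huv : u ≤ v) (hvd : v ≤ d) :
    ∫ s in u..v, fsp m b d s =
      -(2 + m) / m * (v - u) +
        Dcoef m b * ((v ^ ((m : ℝ) / 2 + 1) - u ^ ((m : ℝ) / 2 + 1)) / (m / 2 + 1)) := by
  refine (intervalIntegral.integral_congr_ae (.of_forall fun s hs => ?_)).trans
    (integral_const_add_mul_rpow (by positivity) _ _ u v)
  rw [uIoc_of_le huv] at hs
  exact fsp_of_mem_Ioc ⟨hbu.trans_lt hs.1, hs.2.trans hvd⟩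

lemma setIntegral_Ici_abs_fsp_eq_intervalIntegral (hb : 1 ≤ b) (hbd : b ≤ d) :
    ∫ t in Ici 0, |fsp m b d t| = ∫ t in 1..d, |fsp m b d t| := by
  have hzero (t : ℝ) (ht : t ∉ Ioc 1 d) : |fsp m b d t| = 0 := by
    rw [fsp_eq_zero_of_notMem_Ioc hb hbd ht, abs_zero]
  rw [setIntegral_eq_integral_of_forall_compl_eq_zero fun t ht =>
      hzero t fun h => ht (mem_Ici.mpr (by linarith [h.1])),
    integral_eq_integral_of_support_subset fun t ht => by_contra fun h => ht (hzero t h)]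

lemma setIntegral_Ici_abs_fsp_pos (hm : 0 < m) (hb : 1 < b) (hbd : b ≤ d) :
    0 < ∫ t in Ici 0, |fsp m b d t| := by
  have hI {u v : ℝ} (hu : u ∈ Icc 0 d) (hv : v ∈ Icc 0 d) :
      IntervalIntegrable (fun t => |fsp m b d t|) volume u v :=
    (intervalIntegrable_fsp hb.le hbd hu hv).abs
  rw [setIntegral_Ici_abs_fsp_eq_intervalIntegral hb.le hbd,
    ← integral_add_adjacent_intervals (hI ⟨zero_le_one, by linarith⟩ ⟨by linarith, hbd⟩)
      (hI ⟨by linarith, hbd⟩ ⟨by linarith, le_rfl⟩)]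
  refine add_pos_of_pos_of_nonneg (intervalIntegral_pos_of_pos_on
    (hI ⟨zero_le_one, by linarith⟩ ⟨by linarith, hbd⟩) (fun t ht => ?_) hb)
    (integral_nonneg hbd fun _ _ => abs_nonneg _)
  exact abs_pos.mpr (fsp_neg_of_mem_Ioc_one hm (Ioo_subset_Ioc_self ht)).ne

lemma setIntegral_Ici_abs_fsp_eq_of_t0_mem (hm : 0 < m) (hb : 1 ≤ b) (hD : 0 < Dcoef m b)
    (hbt : b ≤ t0 m b) (htd : t0 m b ≤ d) :
    ∫ t in Ici 0, |fsp m b d t| =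
      -(∫ t in 1..b, fsp m b d t) - (∫ t in b..t0 m b, fsp m b d t) +
        ∫ t in t0 m b..d, fsp m b d t := by
  have hI {u v : ℝ} (hu : u ∈ Icc 0 d) (hv : v ∈ Icc 0 d) :
      IntervalIntegrable (fun t => |fsp m b d t|) volume u v :=
    (intervalIntegrable_fsp hb (hbt.trans htd) hu hv).abs
  rw [setIntegral_Ici_abs_fsp_eq_intervalIntegral hb (hbt.trans htd),
    ← integral_add_adjacent_intervals (b := t0 m b)
      (hI ⟨zero_le_one, by linarith⟩ ⟨by linarith, htd⟩)
      (hI ⟨by linarith, htd⟩ ⟨by linarith, le_rfl⟩),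
    ← integral_add_adjacent_intervals (b := b)
      (hI ⟨zero_le_one, by linarith⟩ ⟨by linarith, by linarith⟩)
      (hI ⟨by linarith, by linarith⟩ ⟨by linarith, htd⟩),
    integral_abs_of_nonpos_on fun t ht => (fsp_neg_of_mem_Ioc_one hm (uIoc_of_le hb ▸ ht)).le,
    integral_abs_of_nonpos_on fun t ht =>
      fsp_nonpos_of_mem_Ioc hm (by linarith) hD (uIoc_of_le hbt ▸ ht) htd,
    integral_abs_of_nonneg_on fun t ht => fsp_nonneg_of_mem_Ioc hm hD hbt (uIoc_of_le htd ▸ ht)]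
  ring

lemma setIntegral_Ici_abs_fsp_eq_denom (hm : 0 < m) (hb : 1 ≤ b) (hbd : b ≤ d)
    (hD : 0 < Dcoef m b) (hfb : -(2 + (m : ℝ)) / m + Dcoef m b * b ^ ((m : ℝ) / 2) < 0)
    (hfd : 0 < -(2 + (m : ℝ)) / m + Dcoef m b * d ^ ((m : ℝ) / 2)) :
    ∫ t in Ici 0, |fsp m b d t| = denom m b d := by
  have hm' : (0 : ℝ) < m := Nat.cast_pos.mpr hm
  have hb₀ : 0 < b := by linarith
  have hd₀ : 0 < d := by linarith
  have hbt : b < t0 m b := lt_t0 hm hb₀.le hD hfb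
  have htd : t0 m b < d := t0_lt hm hd₀.le hD hfd
  rw [setIntegral_Ici_abs_fsp_eq_of_t0_mem hm hb hD hbt.le htd.le, integral_fsp_one_to_b hb,
    integral_fsp_of_b_le le_rfl hbt.le htd.le, integral_fsp_of_b_le hbt.le htd.le le_rfl]
  have hT : t0 m b ^ ((m : ℝ) / 2) = (2 + m) / m / Dcoef m b :=
    eq_div_of_mul_eq hD.ne' (by rw [mul_comm, Dcoef_mul_t0_rpow hm hD])
  have hβ := two_mul_rpow_neg_sub_one_pos hD
  have hY : 0 < b ^ ((m : ℝ) / 2) := rpow_pos_of_pos hb₀ _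
  rw [denom, rpow_add_one hb₀.ne', rpow_add_one (t0_pos hD).ne', rpow_add_one hd₀.ne',
    rpow_add hd₀ 1, rpow_one, hT, Dcoef, neg_div (2 : ℝ) (m : ℝ), rpow_neg hb₀.le]
  rw [neg_div (2 : ℝ) (m : ℝ), rpow_neg hb₀.le] at hβ
  generalize b ^ ((m : ℝ) / 2) = Y at hY hβ ⊢
  generalize d ^ ((m : ℝ) / 2) = X
  generalize t0 m b = s
  have h2Y : 0 < 2 - Y := by
    have := mul_pos hY hβ
    rwa [mul_sub, mul_one, mul_left_comm, mul_inv_cancel₀ hY.ne', mul_one] at this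
  field_simp
  ring

end Fsp

theorem stmt_4 (m : ℕ) (hm : 1 ≤ m) (b d : ℝ) (h : (b, d) ∈ Sset m) :
    0 < denom m b d ∧
    denom m b d = ∫ t in Set.Ici (0 : ℝ), |fsp m b d t| ∧
    ENNReal.ofReal (d - 1) ≤
      MeasureTheory.volume {t : ℝ | 0 ≤ t ∧ 1 ≤ |Lam m (fsp m b d) t|} ∧
    ENNReal.ofReal (Wf m b d * ∫ t in Set.Ici (0 : ℝ), |fsp m b d t|) ≤
      MeasureTheory.volume {t : ℝ | 0 ≤ t ∧ 1 ≤ |Lam m (fsp m b d) t|} := by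
  simp only [Sset, mem_ofPred_eq] at h
  obtain ⟨hb, hbd, hD, hfb, hfd, -⟩ := h
  have hnorm := setIntegral_Ici_abs_fsp_eq_denom hm hb.le hbd.le hD hfb hfd
  have hpos : 0 < denom m b d := hnorm ▸ setIntegral_Ici_abs_fsp_pos hm hb hbd.le
  have hvol := ofReal_sub_one_le_volume_Lam_fsp hm hb.le hbd.le
  refine ⟨hpos, hnorm.symm, hvol, ?_⟩
  rwa [hnorm, Wf, div_mul_cancel₀ _ hpos.ne']
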